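/- Assume A(x) > 0 for all x ∈ ℝ. Define I₂ := V/A^(n/(n−2)) (real power). Then for every transformation datum and every V : ℝ → ℝ, the transformed invariant Ī₂ := V̄/Ā^(n/(n−2)) satisfies Ī₂(f x) = I₂(x) for all x ∈ ℝ, i.e. Ī₂ = I₂∘f⁻¹. Hence the generalized self-interaction potential I₂ is invariant under the conformal–almost-geodesic frame transformations. -/

import Mathlib

/-- Transformation rule (t1) for the non-minimal coupling coefficient `A`:
`Ā(f x) = exp(−(n−2)·γ₁ x)·A x`. -/
noncomputable def transA (n : ℕ) (f : ℝ ≃ ℝ) (γ₁ A : ℝ → ℝ) : ℝ → ℝ :=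
  fun y => Real.exp (-((n : ℝ) - 2) * γ₁ (f.symm y)) * A (f.symm y)

/-- Transformation rule (t5) for the self-interaction potential `V`:
`V̄(f x) = exp(−n·γ₁ x)·V x`. -/
noncomputable def transV (n : ℕ) (f : ℝ ≃ ℝ) (γ₁ V : ℝ → ℝ) : ℝ → ℝ :=
  fun y => Real.exp (-(n : ℝ) * γ₁ (f.symm y)) * V (f.symm y)

/-- The invariant `I₂ := V / A^(n/(n−2))` of eq. (i2) (real power). -/
noncomputable def inv2 (n : ℕ) (A V : ℝ → ℝ) : ℝ → ℝ :=
  fun x => V x / (A x) ^ ((n : ℝ) / ((n : ℝ) - 2))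


/-- With `p = n − 2` and `m = n`, the conformal weight of `Ā^(n/(n−2))` is that of `V̄`, so the
two cancel in `Ī₂`. -/
theorem Real.exp_neg_mul_mul_rpow_div {p : ℝ} (hp : p ≠ 0) (m t : ℝ) {a : ℝ} (ha : 0 ≤ a) :
    (Real.exp (-p * t) * a) ^ (m / p) = Real.exp (-m * t) * a ^ (m / p) := by
  rw [Real.mul_rpow (Real.exp_pos _).le ha, ← Real.exp_mul]
  congr 2
  field_simp

theorem inv2_transA_transV {n : ℕ} (hn : (n : ℝ) - 2 ≠ 0) (f : ℝ ≃ ℝ) (γ₁ A V : ℝ → ℝ)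
    (hA : ∀ x, 0 ≤ A x) (y : ℝ) :
    inv2 n (transA n f γ₁ A) (transV n f γ₁ V) y = inv2 n A V (f.symm y) := by
  simp only [inv2, transA, transV]
  rw [Real.exp_neg_mul_mul_rpow_div hn _ _ (hA _), mul_div_mul_left _ _ (Real.exp_ne_zero _)]

theorem inv2_invariant_general (n : ℕ) (hn : 3 ≤ n)
    (f : ℝ ≃ ℝ) (γ₁ : ℝ → ℝ) (A V : ℝ → ℝ) (hA : ∀ x, 0 < A x) :
    (∀ x, inv2 n (transA n f γ₁ A) (transV n f γ₁ V) (f x) = inv2 n A V x) ∧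
    inv2 n (transA n f γ₁ A) (transV n f γ₁ V) = inv2 n A V ∘ ⇑f.symm := by
  have hn2 : (n : ℝ) - 2 ≠ 0 := by
    have : (3 : ℝ) ≤ n := by exact_mod_cast hn
    linarith
  have key := inv2_transA_transV hn2 f γ₁ A V fun x => (hA x).le
  exact ⟨fun x => by simpa using key (f x), funext key⟩

/-- The generalized self-interaction potential `I₂ = V / A^(n/(n−2))` is
invariant under the conformal–almost-geodesic frame transformations: assuming
`A > 0`, the transformed invariant `Ī₂ := V̄ / Ā^(n/(n−2))` satisfies
`Ī₂(f x) = I₂(x)` for all `x`, i.e. `Ī₂ = I₂ ∘ f⁻¹`. -/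
theorem inv2_invariant (n : ℕ) (hn : 3 ≤ n)
    (f : ℝ ≃ ℝ) (γ₁ γ₂ γ₃ : ℝ → ℝ) (A V : ℝ → ℝ) (hA : ∀ x, 0 < A x) :
    (∀ x, inv2 n (transA n f γ₁ A) (transV n f γ₁ V) (f x) = inv2 n A V x) ∧
    inv2 n (transA n f γ₁ A) (transV n f γ₁ V) = inv2 n A V ∘ ⇑f.symm :=
  inv2_invariant_general n hn f γ₁ A V hA
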